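/- arXiv:1203.2752 — 2 statements merged into one kernel-verified Lean document; each statement's English description precedes it below -/
import Mathlib

section
/- Let G be the right-angled Coxeter group based on a finite simple graph Γ with vertex set S, and let u, v ∈ S with u ≠ v and u not adjacent to v (i.e., u ∉ Star(v)). If w is a geodesic word over S whose last letter is u, then the word obtained by appending v to w is geodesic. -/
/-- The relators of the right-angled Coxeter group on a simple graph `Γ`. -/
def racgRels {V : Type*} (Γ : SimpleGraph V) : Set (FreeGroup V) :=
  {r | (∃ s : V, r = FreeGroup.of s ^ 2) ∨
       (∃ s t : V, Γ.Adj s t ∧ r = (FreeGroup.of s * FreeGroup.of t) ^ 2)}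

/-- The natural projection from words to the right-angled Coxeter group. -/
def racgPi {V : Type*} (Γ : SimpleGraph V) (w : List V) :
    PresentedGroup (racgRels Γ) :=
  (w.map fun s => (PresentedGroup.of s : PresentedGroup (racgRels Γ))).prod

/-- A word is geodesic if no shorter word represents the same element. -/
def racgIsGeodesic {V : Type*} (Γ : SimpleGraph V) (w : List V) : Prop :=
  ∀ w' : List V, racgPi Γ w' = racgPi Γ w → w.length ≤ w'.length

open CoxeterSystem
noncomputable section
attribute [local instance] Classical.propDecidable

variable {V : Type*} (Γ : SimpleGraph V)

def racgMatrix : CoxeterMatrix V where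
  M := Matrix.of fun i j => if i = j then 1 else if Γ.Adj i j then 2 else 0
  isSymm := by
    ext i j
    simp only [Matrix.transpose_apply, Matrix.of_apply]
    by_cases h : i = j
    · subst h; simp
    · rw [if_neg (Ne.symm h), if_neg h]
      by_cases ha : Γ.Adj i j
      · rw [if_pos ha, if_pos ha.symm]
      · rw [if_neg ha, if_neg (fun h' => ha h'.symm)]
  diagonal i := by simp
  off_diagonal i j h := by
    simp only [Matrix.of_apply, if_neg h]
    split <;> simp

lemma racgMatrix_adj {i j : V} (h : Γ.Adj i j) : racgMatrix Γ i j = 2 := by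
  have : i ≠ j := h.ne
  simp [racgMatrix, this, h]

lemma racgMatrix_nadj {i j : V} (hne : i ≠ j) (h : ¬ Γ.Adj i j) : racgMatrix Γ i j = 0 := by
  simp [racgMatrix, hne, h]

lemma relator_one {r : FreeGroup V} (hr : r ∈ racgRels Γ) :
    (PresentedGroup.mk (racgRels Γ) r) = 1 :=
  (QuotientGroup.eq_one_iff r).mpr (Subgroup.subset_normalClosure hr)

lemma mrelator_one {r : FreeGroup V} (hr : r ∈ (racgMatrix Γ).relationsSet) :
    (PresentedGroup.mk (racgMatrix Γ).relationsSet r) = 1 :=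
  (QuotientGroup.eq_one_iff r).mpr (Subgroup.subset_normalClosure hr)

abbrev RW := PresentedGroup (racgRels Γ)

def racgToM : RW Γ →* (racgMatrix Γ).Group :=
  PresentedGroup.toGroup (f := fun i => (PresentedGroup.of i : (racgMatrix Γ).Group)) (by
    rintro r (⟨s, rfl⟩ | ⟨s, t, hst, rfl⟩)
    · have : ((PresentedGroup.mk _ ((FreeGroup.of s * FreeGroup.of s) ^ (racgMatrix Γ s s)) : (racgMatrix Γ).Group)) = 1 :=
        mrelator_one Γ ⟨(s, s), rfl⟩
      simpa [sq, CoxeterMatrix.diagonal, PresentedGroup.of] using this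
    · have : ((PresentedGroup.mk _ ((FreeGroup.of s * FreeGroup.of t) ^ (racgMatrix Γ s t)) : (racgMatrix Γ).Group)) = 1 :=
        mrelator_one Γ ⟨(s, t), rfl⟩
      rw [racgMatrix_adj Γ hst] at this
      simpa [PresentedGroup.of] using this)

def racgFromM : (racgMatrix Γ).Group →* RW Γ :=
  PresentedGroup.toGroup (f := fun i => (PresentedGroup.of i : RW Γ)) (by
    rintro r ⟨⟨i, j⟩, rfl⟩
    show FreeGroup.lift _ ((FreeGroup.of i * FreeGroup.of j) ^ racgMatrix Γ i j) = 1
    by_cases hij : i = j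
    · subst hij
      have : ((PresentedGroup.mk _ ((FreeGroup.of i) ^ 2) : RW Γ)) = 1 :=
        relator_one Γ (Or.inl ⟨i, rfl⟩)
      simp only [CoxeterMatrix.diagonal, pow_one, map_mul, FreeGroup.lift_apply_of]
      simpa [sq, PresentedGroup.of] using this
    · by_cases ha : Γ.Adj i j
      · have : ((PresentedGroup.mk _ ((FreeGroup.of i * FreeGroup.of j) ^ 2) : RW Γ)) = 1 :=
          relator_one Γ (Or.inr ⟨i, j, ha, rfl⟩)
        rw [racgMatrix_adj Γ ha]
        simpa [PresentedGroup.of] using this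
      · rw [racgMatrix_nadj Γ hij ha, pow_zero, map_one])

lemma racgToM_of (i : V) : racgToM Γ (PresentedGroup.of i) = PresentedGroup.of i :=
  PresentedGroup.toGroup.of _

lemma racgFromM_of (i : V) : racgFromM Γ (PresentedGroup.of i) = PresentedGroup.of i :=
  PresentedGroup.toGroup.of _

def racgEquiv : RW Γ ≃* (racgMatrix Γ).Group :=
  MonoidHom.toMulEquiv (racgToM Γ) (racgFromM Γ)
    (by ext x
        show (racgFromM Γ) ((racgToM Γ) (PresentedGroup.of x)) = PresentedGroup.of x
        rw [racgToM_of, racgFromM_of])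
    (by apply MonoidHom.ext
        intro y
        induction y using PresentedGroup.induction_on with
        | H z =>
          refine FreeGroup.induction_on z ?_ ?_ ?_ ?_
          · exact (map_one _).trans (map_one _).symm
          · intro x
            show (racgToM Γ) ((racgFromM Γ) (PresentedGroup.of x)) = PresentedGroup.of x
            rw [racgFromM_of, racgToM_of]
          · intro x hx
            exact (map_inv ((racgToM Γ).comp (racgFromM Γ)) _).trans ((congrArg (·⁻¹) hx).trans (map_inv (MonoidHom.id (racgMatrix Γ).Group) _).symm)
          · intro a b ha hb
            exact (map_mul _ _ _).trans ((congrArg₂ (· * ·) ha hb).trans (map_mul _ _ _).symm) )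

def racgCS : CoxeterSystem (racgMatrix Γ) (RW Γ) := ⟨racgEquiv Γ⟩

lemma racgCS_simple (i : V) : (racgCS Γ).simple i = PresentedGroup.of i := by
  show (racgEquiv Γ).symm (PresentedGroup.of i) = PresentedGroup.of i
  exact racgFromM_of Γ i

local notation "cs" => racgCS Γ

lemma racgPi_eq_wordProd (w : List V) : racgPi Γ w = (cs).wordProd w := by
  unfold racgPi CoxeterSystem.wordProd
  rw [List.map_congr_left fun i (_ : i ∈ w) => (racgCS_simple Γ i).symm]

lemma geodesic_iff_isReduced (w : List V) :
    racgIsGeodesic Γ w ↔ (cs).IsReduced w := by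
  constructor
  · intro h
    obtain ⟨ω, hlen, hπ⟩ := (cs).exists_reduced_word ((cs).wordProd w)
    have := h ω (by rw [racgPi_eq_wordProd, racgPi_eq_wordProd, ← hπ])
    have h2 := (cs).length_wordProd_le w
    unfold CoxeterSystem.IsReduced at hlen ⊢
    rw [← hπ] at hlen
    omega
  · intro h w' hw'
    rw [racgPi_eq_wordProd, racgPi_eq_wordProd] at hw'
    calc w.length = (cs).length ((cs).wordProd w) := h.symm
    _ = (cs).length ((cs).wordProd w') := by rw [hw']
    _ ≤ w'.length := (cs).length_wordProd_le w'

lemma simple_comm {i j : V} (h : Γ.Adj i j) :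
    (cs).simple i * (cs).simple j = (cs).simple j * (cs).simple i := by
  have h2 := (cs).simple_mul_simple_pow i j
  rw [racgMatrix_adj Γ h, sq] at h2
  have : ((cs).simple i * (cs).simple j)⁻¹ = (cs).simple j * (cs).simple i := by
    rw [mul_inv_rev, CoxeterSystem.inv_simple, CoxeterSystem.inv_simple]
  rw [← this]
  exact (inv_eq_of_mul_eq_one_right h2).symm

/-! ### The sign representation on `RW Γ × ℤˣ` -/

def eta (i : V) (t : RW Γ) : ℤˣ := if t = (cs).simple i then -1 else 1

lemma eta_conj' (i : V) (g t : RW Γ) (hg : g⁻¹ * (cs).simple i * g = (cs).simple i) :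
    eta Γ i (g * t * g⁻¹) = eta Γ i t := by
  unfold eta
  have : (g * t * g⁻¹ = (cs).simple i) ↔ (t = (cs).simple i) := by
    constructor
    · intro h
      have : t = g⁻¹ * (g * t * g⁻¹) * g := by group
      rw [h] at this
      rw [this, hg]
    · intro h
      subst h
      calc g * (cs).simple i * g⁻¹ = g * (g⁻¹ * (cs).simple i * g) * g⁻¹ := by rw [hg]
        _ = (cs).simple i := by group
  exact if_congr this rfl rfl

lemma eta_conj (i : V) (t : RW Γ) :
    eta Γ i ((cs).simple i * t * (cs).simple i) = eta Γ i t := by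
  have := eta_conj' Γ i ((cs).simple i) t
    (by rw [CoxeterSystem.inv_simple, (cs).simple_mul_simple_self i, one_mul])
  rwa [CoxeterSystem.inv_simple] at this

def fPerm (i : V) : Equiv.Perm (RW Γ × ℤˣ) where
  toFun p := ((cs).simple i * p.1 * (cs).simple i, eta Γ i p.1 * p.2)
  invFun p := ((cs).simple i * p.1 * (cs).simple i, eta Γ i p.1 * p.2)
  left_inv p := by
    obtain ⟨t, ε⟩ := p
    have h1 := (cs).simple_mul_simple_self i
    simp only [Prod.mk.injEq]
    constructor
    · calc (cs).simple i * ((cs).simple i * t * (cs).simple i) * (cs).simple i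
          = ((cs).simple i * (cs).simple i) * t * ((cs).simple i * (cs).simple i) := by group
        _ = t := by rw [h1]; group
    · rw [eta_conj, ← mul_assoc, Int.units_mul_self, one_mul]
  right_inv p := by
    obtain ⟨t, ε⟩ := p
    have h1 := (cs).simple_mul_simple_self i
    simp only [Prod.mk.injEq]
    constructor
    · calc (cs).simple i * ((cs).simple i * t * (cs).simple i) * (cs).simple i
          = ((cs).simple i * (cs).simple i) * t * ((cs).simple i * (cs).simple i) := by group
        _ = t := by rw [h1]; group
    · rw [eta_conj, ← mul_assoc, Int.units_mul_self, one_mul]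

lemma fPerm_liftable : (racgMatrix Γ).IsLiftable (fPerm Γ) := by
  intro i j
  by_cases hij : i = j
  · subst hij
    rw [show racgMatrix Γ i i = 1 from (racgMatrix Γ).diagonal i, pow_one]
    apply Equiv.ext
    intro p
    rw [Equiv.Perm.mul_apply]
    exact (fPerm Γ i).left_inv p
  · by_cases ha : Γ.Adj i j
    · rw [racgMatrix_adj Γ ha, sq]
      apply Equiv.ext
      intro ⟨t, ε⟩
      have hcomm := simple_comm Γ ha
      have h2 : ((cs).simple i * (cs).simple j) * ((cs).simple i * (cs).simple j) = 1 := by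
        have := (cs).simple_mul_simple_pow i j
        rwa [racgMatrix_adj Γ ha, sq] at this
      have h2' : ((cs).simple j * (cs).simple i) * ((cs).simple j * (cs).simple i) = 1 := by
        have := (cs).simple_mul_simple_pow' i j
        rwa [racgMatrix_adj Γ ha, sq] at this
      have hsj : (cs).simple j * (cs).simple i * (cs).simple j = (cs).simple i := by
        rw [← hcomm, mul_assoc, (cs).simple_mul_simple_self j, mul_one]
      have hsi : (cs).simple i * (cs).simple j * (cs).simple i = (cs).simple j := by
        rw [hcomm, mul_assoc, (cs).simple_mul_simple_self i, mul_one]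
      have hA : ∀ t' : RW Γ, eta Γ i ((cs).simple j * t' * (cs).simple j) = eta Γ i t' := by
        intro t'
        have := eta_conj' Γ i ((cs).simple j) t'
          (by rw [CoxeterSystem.inv_simple]; exact hsj)
        rwa [CoxeterSystem.inv_simple] at this
      have hB : ∀ t' : RW Γ, eta Γ j ((cs).simple i * t' * (cs).simple i) = eta Γ j t' := by
        intro t'
        have := eta_conj' Γ j ((cs).simple i) t'
          (by rw [CoxeterSystem.inv_simple]; exact hsi)
        rwa [CoxeterSystem.inv_simple] at this
      rw [Equiv.Perm.mul_apply, Equiv.Perm.mul_apply, Equiv.Perm.mul_apply,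
        Equiv.Perm.one_apply]
      show ((fPerm Γ i) ((fPerm Γ j) ((fPerm Γ i) ((fPerm Γ j) (t, ε))))) = (t, ε)
      simp only [fPerm, Equiv.coe_fn_mk]
      refine Prod.ext ?_ ?_
      · show (cs).simple i * ((cs).simple j * ((cs).simple i * ((cs).simple j * t *
          (cs).simple j) * (cs).simple i) * (cs).simple j) * (cs).simple i = t
        calc (cs).simple i * ((cs).simple j * ((cs).simple i * ((cs).simple j * t *
              (cs).simple j) * (cs).simple i) * (cs).simple j) * (cs).simple i
            = (((cs).simple i * (cs).simple j) * ((cs).simple i * (cs).simple j)) * t *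
              (((cs).simple j * (cs).simple i) * ((cs).simple j * (cs).simple i)) := by group
          _ = t := by rw [h2, h2']; group
      · show eta Γ i ((cs).simple j * ((cs).simple i * ((cs).simple j * t * (cs).simple j) *
            (cs).simple i) * (cs).simple j) *
            (eta Γ j ((cs).simple i * ((cs).simple j * t * (cs).simple j) * (cs).simple i) *
            (eta Γ i ((cs).simple j * t * (cs).simple j) * (eta Γ j t * ε))) = ε
        simp only [hA, hB, eta_conj]
        rw [mul_left_comm (eta Γ j t) (eta Γ i t), ← mul_assoc, Int.units_mul_self, one_mul,
          ← mul_assoc, Int.units_mul_self, one_mul]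
    · rw [racgMatrix_nadj Γ hij ha, pow_zero]

def Phi : RW Γ →* Equiv.Perm (RW Γ × ℤˣ) := (cs).lift ⟨fPerm Γ, fPerm_liftable Γ⟩

lemma Phi_simple (i : V) : Phi Γ ((cs).simple i) = fPerm Γ i :=
  (cs).lift_apply_simple (fPerm_liftable Γ) i

def signOf (t : RW Γ) (l : List (RW Γ)) : ℤˣ :=
  (l.map fun r => if r = t then (-1 : ℤˣ) else 1).prod

lemma signOf_of_not_mem {t : RW Γ} {l : List (RW Γ)} (h : t ∉ l) : signOf Γ t l = 1 := by
  induction l with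
  | nil => rfl
  | cons a l ih =>
    have h1 : a ≠ t := fun h' => h (h' ▸ List.mem_cons_self)
    have h2 : t ∉ l := fun h' => h (List.mem_cons_of_mem a h')
    simp only [signOf, List.map_cons, List.prod_cons, if_neg h1]
    rw [one_mul]
    exact ih h2

lemma Phi_wordProd (ω : List V) (t : RW Γ) (ε : ℤˣ) :
    Phi Γ ((cs).wordProd ω) (t, ε) =
      ((cs).wordProd ω * t * ((cs).wordProd ω)⁻¹,
        signOf Γ t ((cs).rightInvSeq ω) * ε) := by
  induction ω with
  | nil => simp [signOf]
  | cons i ω ih =>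
    rw [CoxeterSystem.wordProd_cons, map_mul, Equiv.Perm.mul_apply, ih, Phi_simple]
    show ((cs).simple i * ((cs).wordProd ω * t * ((cs).wordProd ω)⁻¹) * (cs).simple i,
        eta Γ i ((cs).wordProd ω * t * ((cs).wordProd ω)⁻¹) *
          (signOf Γ t ((cs).rightInvSeq ω) * ε)) = _
    refine Prod.ext ?_ ?_
    · show _ = (cs).simple i * (cs).wordProd ω * t * ((cs).simple i * (cs).wordProd ω)⁻¹
      rw [mul_inv_rev, CoxeterSystem.inv_simple]
      group
    · show eta Γ i ((cs).wordProd ω * t * ((cs).wordProd ω)⁻¹) *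
          (signOf Γ t ((cs).rightInvSeq ω) * ε) =
          signOf Γ t ((cs).rightInvSeq (i :: ω)) * ε
      have hris : (cs).rightInvSeq (i :: ω) =
          ((cs).wordProd ω)⁻¹ * ((cs).simple i) * ((cs).wordProd ω) :: (cs).rightInvSeq ω := rfl
      rw [hris]
      simp only [signOf, List.map_cons, List.prod_cons]
      have hcond : (((cs).wordProd ω)⁻¹ * ((cs).simple i) * ((cs).wordProd ω) = t)
          ↔ ((cs).wordProd ω * t * ((cs).wordProd ω)⁻¹ = (cs).simple i) := by
        constructor
        · intro h; rw [← h]; group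
        · intro h; rw [← h]; group
      have : eta Γ i ((cs).wordProd ω * t * ((cs).wordProd ω)⁻¹) =
          if ((cs).wordProd ω)⁻¹ * ((cs).simple i) * ((cs).wordProd ω) = t then (-1 : ℤˣ)
          else 1 := by
        unfold eta
        exact (if_congr hcond rfl rfl).symm
      rw [this]
      exact (mul_assoc _ _ _).symm

def mu (w t : RW Γ) : ℤˣ := (Phi Γ w (t, 1)).2

lemma Phi_apply (w t : RW Γ) (ε : ℤˣ) : Phi Γ w (t, ε) = (w * t * w⁻¹, mu Γ w t * ε) := by
  obtain ⟨ω, rfl⟩ := (cs).wordProd_surjective w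
  rw [Phi_wordProd]
  unfold mu
  rw [Phi_wordProd, mul_one]

lemma mu_mul (a b t : RW Γ) : mu Γ (a * b) t = mu Γ a (b * t * b⁻¹) * mu Γ b t := by
  have h1 : Phi Γ (a * b) (t, 1) = Phi Γ a (Phi Γ b (t, 1)) := by
    rw [map_mul, Equiv.Perm.mul_apply]
  rw [Phi_apply, Phi_apply, Phi_apply] at h1
  have h2 := congrArg Prod.snd h1
  simp only [mul_one] at h2
  exact h2

lemma mu_simple_self (i : V) : mu Γ ((cs).simple i) ((cs).simple i) = -1 := by
  unfold mu
  rw [Phi_simple]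
  show eta Γ i ((cs).simple i) * 1 = -1
  rw [mul_one]
  exact if_pos rfl

lemma mu_eq_signOf (ω : List V) (t : RW Γ) :
    mu Γ ((cs).wordProd ω) t = signOf Γ t ((cs).rightInvSeq ω) := by
  unfold mu
  rw [Phi_wordProd, mul_one]

lemma lt_of_mu_neg {w : RW Γ} {i : V} (h : mu Γ w ((cs).simple i) = -1) :
    (cs).length (w * (cs).simple i) < (cs).length w := by
  obtain ⟨ω, hred, rfl⟩ := (cs).exists_reduced_word' w
  rw [mu_eq_signOf] at h
  have hmem : (cs).simple i ∈ (cs).rightInvSeq ω := by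
    by_contra hmem
    rw [signOf_of_not_mem Γ hmem] at h
    exact absurd h (by decide)
  exact ((cs).isRightInversion_of_mem_rightInvSeq hred hmem).2

lemma mu_neg_iff {w : RW Γ} {i : V} :
    mu Γ w ((cs).simple i) = -1 ↔ (cs).length (w * (cs).simple i) < (cs).length w := by
  constructor
  · exact lt_of_mu_neg Γ
  · intro h
    have hw : w = (w * (cs).simple i) * (cs).simple i :=
      ((cs).simple_mul_simple_cancel_right i).symm
    have hconj : (cs).simple i * (cs).simple i * ((cs).simple i)⁻¹ = (cs).simple i := by
      rw [CoxeterSystem.inv_simple, mul_assoc, (cs).simple_mul_simple_self i, mul_one]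
    have key : mu Γ w ((cs).simple i) =
        mu Γ (w * (cs).simple i) ((cs).simple i) * (-1) := by
      nth_rewrite 1 [hw]
      rw [mu_mul, hconj, mu_simple_self]
    rcases Int.units_eq_one_or (mu Γ (w * (cs).simple i) ((cs).simple i)) with h1 | h1
    · rw [key, h1, one_mul]
    · exfalso
      have h2 := lt_of_mu_neg Γ (i := i) (w := w * (cs).simple i) h1
      rw [(cs).simple_mul_simple_cancel_right i] at h2
      omega

lemma exchange {ω : List V} (hred : (cs).IsReduced ω) {i : V}
    (h : (cs).length ((cs).wordProd ω * (cs).simple i) < (cs).length ((cs).wordProd ω)) :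
    ∃ j, ∃ hj : j < ω.length, ((cs).rightInvSeq ω).getD j 1 = (cs).simple i ∧
      (cs).wordProd ω * (cs).simple i = (cs).wordProd (ω.eraseIdx j) := by
  have hmu := (mu_neg_iff Γ).mpr h
  rw [mu_eq_signOf] at hmu
  have hmem : (cs).simple i ∈ (cs).rightInvSeq ω := by
    by_contra hmem
    rw [signOf_of_not_mem Γ hmem] at hmu
    exact absurd hmu (by decide)
  obtain ⟨j, hj, hval⟩ := List.mem_iff_getElem.mp hmem
  rw [(cs).length_rightInvSeq] at hj
  have hgetD : ((cs).rightInvSeq ω).getD j 1 = (cs).simple i := by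
    rw [List.getD_eq_getElem _ _ (by rw [(cs).length_rightInvSeq]; exact hj)]
    exact hval
  refine ⟨j, hj, hgetD, ?_⟩
  rw [← hgetD]
  exact (cs).wordProd_mul_getD_rightInvSeq ω j

/-! ### The affine representation of the dihedral parabolic -/

def aff (ε : ℤˣ) (m : ℤ) : Equiv.Perm ℤ where
  toFun z := (ε : ℤ) * z + m
  invFun z := (ε : ℤ) * (z - m)
  left_inv z := by
    have hee : (ε : ℤ) * (ε : ℤ) = 1 := by
      rw [← Units.val_mul, Int.units_mul_self, Units.val_one]
    simp only [add_sub_cancel_right, ← mul_assoc, hee, one_mul]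
  right_inv z := by
    have hee : (ε : ℤ) * (ε : ℤ) = 1 := by
      rw [← Units.val_mul, Int.units_mul_self, Units.val_one]
    simp only [← mul_assoc, hee]
    rw [one_mul, sub_add_cancel]

lemma aff_apply (ε : ℤˣ) (m z : ℤ) : aff ε m z = (ε : ℤ) * z + m := rfl

lemma aff_mul (ε ε' : ℤˣ) (m m' : ℤ) :
    aff ε m * aff ε' m' = aff (ε * ε') ((ε : ℤ) * m' + m) := by
  apply Equiv.ext
  intro z
  show aff ε m (aff ε' m' z) = _
  rw [aff_apply, aff_apply, aff_apply]
  push_cast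
  ring

lemma aff_one : aff 1 0 = 1 := by
  apply Equiv.ext
  intro z
  show (1 : ℤˣ) * z + 0 = z
  simp

lemma aff_m_inj {ε ε' : ℤˣ} {m m' : ℤ} (h : aff ε m = aff ε' m') : m = m' := by
  have := Equiv.ext_iff.mp h 0
  rw [aff_apply, aff_apply] at this
  simpa using this

lemma aff_inv (ε : ℤˣ) (m : ℤ) : (aff ε m)⁻¹ = aff ε (-((ε : ℤ) * m)) := by
  apply inv_eq_of_mul_eq_one_right
  rw [aff_mul, Int.units_mul_self]
  have hee : (ε : ℤ) * (ε : ℤ) = 1 := by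
    rw [← Units.val_mul, Int.units_mul_self, Units.val_one]
  have : (ε : ℤ) * -((ε : ℤ) * m) + m = 0 := by
    rw [mul_neg, ← mul_assoc, hee]
    ring
  rw [this, aff_one]

lemma aff_conj (ε : ℤˣ) (m k : ℤ) :
    (aff ε m)⁻¹ * aff (-1) k * aff ε m = aff (-1) ((ε : ℤ) * (k - 2 * m)) := by
  rw [aff_inv, aff_mul, aff_mul]
  rcases Int.units_eq_one_or ε with rfl | rfl
  · norm_num
    congr 1
    ring
  · norm_num
    congr 1
    ring

section Dihedral

variable (u v : V) (huv : u ≠ v) (hadj : ¬ Γ.Adj u v)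

def dihedralF : V → Equiv.Perm ℤ := fun i =>
  if i = u then aff (-1) 0 else if i = v then aff (-1) 1 else 1

lemma dihedralF_sq (i : V) : dihedralF u v i * dihedralF u v i = 1 := by
  unfold dihedralF
  split
  · rw [aff_mul]; norm_num; exact aff_one
  · split
    · rw [aff_mul]; norm_num; exact aff_one
    · rw [one_mul]

include huv hadj in
lemma dihedral_liftable : (racgMatrix Γ).IsLiftable (dihedralF u v) := by
  intro i j
  by_cases hij : i = j
  · subst hij
    rw [show racgMatrix Γ i i = 1 from (racgMatrix Γ).diagonal i, pow_one]
    exact dihedralF_sq u v i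
  · by_cases ha : Γ.Adj i j
    · rw [racgMatrix_adj Γ ha, sq]
      have hone : dihedralF u v i = 1 ∨ dihedralF u v j = 1 := by
        by_contra hc
        push_neg at hc
        obtain ⟨h1, h2⟩ := hc
        have hi : i = u ∨ i = v := by
          unfold dihedralF at h1
          by_contra hcc
          push_neg at hcc
          rw [if_neg hcc.1, if_neg hcc.2] at h1
          exact h1 rfl
        have hj : j = u ∨ j = v := by
          unfold dihedralF at h2
          by_contra hcc
          push_neg at hcc
          rw [if_neg hcc.1, if_neg hcc.2] at h2
          exact h2 rfl
        rcases hi with rfl | rfl <;> rcases hj with rfl | rfl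
        · exact hij rfl
        · exact hadj ha
        · exact hadj ha.symm
        · exact hij rfl
      rcases hone with h1 | h1
      · rw [h1, one_mul, dihedralF_sq]
      · rw [h1, mul_one, dihedralF_sq]
    · rw [racgMatrix_nadj Γ hij ha, pow_zero]

def rho : RW Γ →* Equiv.Perm ℤ :=
  (cs).lift ⟨dihedralF u v, dihedral_liftable Γ u v huv hadj⟩

lemma rho_u : rho Γ u v huv hadj ((cs).simple u) = aff (-1) 0 := by
  unfold rho
  rw [(cs).lift_apply_simple]
  unfold dihedralF
  rw [if_pos rfl]

lemma rho_v : rho Γ u v huv hadj ((cs).simple v) = aff (-1) 1 := by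
  unfold rho
  rw [(cs).lift_apply_simple]
  unfold dihedralF
  rw [if_neg (Ne.symm huv), if_pos rfl]

end Dihedral

section Entry

variable (u v : V) (huv : u ≠ v) (hadj : ¬ Γ.Adj u v)
variable (x y : V) (kx ky : ℤ)

include huv hadj in
lemma rho_alt (hX : rho Γ u v huv hadj ((cs).simple x) = aff (-1) kx)
    (hY : rho Γ u v huv hadj ((cs).simple y) = aff (-1) ky) :
    ∀ d : ℕ, rho Γ u v huv hadj ((cs).wordProd (CoxeterSystem.alternatingWord x y d)) =
      if Even d then aff 1 ((↑(d/2) : ℤ) * (kx - ky))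
      else aff (-1) (ky - (↑(d/2) : ℤ) * (kx - ky)) := by
  intro d
  induction d with
  | zero =>
    show rho Γ u v huv hadj ((cs).wordProd []) = _
    rw [CoxeterSystem.wordProd_nil, map_one, if_pos (Even.zero)]
    norm_num [aff_one]
  | succ d ih =>
    rw [CoxeterSystem.alternatingWord_succ', CoxeterSystem.wordProd_cons, map_mul, ih]
    by_cases hd : Even d
    · obtain ⟨e, rfl⟩ := hd
      have hev : Even (e + e) := ⟨e, rfl⟩
      have hodd : ¬ Even (e + e + 1) := by
        intro h
        exact (Nat.even_add_one.mp h) hev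
      have h1 : (e + e) / 2 = e := by omega
      have h2 : (e + e + 1) / 2 = e := by omega
      rw [if_pos hev, if_pos hev, if_neg hodd, h1, h2, hY, aff_mul]
      norm_num
      congr 1
      ring
    · obtain ⟨e, he⟩ := Nat.not_even_iff_odd.mp hd
      subst he
      have hev : Even (2 * e + 1 + 1) := ⟨e + 1, by ring⟩
      have hodd : ¬ Even (2 * e + 1) := by
        intro h
        rcases h with ⟨k, hk⟩
        omega
      have h1 : (2 * e + 1) / 2 = e := by omega
      have h2 : (2 * e + 1 + 1) / 2 = e + 1 := by omega
      rw [if_neg hodd, if_neg hodd, if_pos hev, h1, h2, hX, aff_mul]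
      norm_num
      congr 1
      push_cast
      ring

include huv hadj in
lemma entry_ne (hX : rho Γ u v huv hadj ((cs).simple x) = aff (-1) kx)
    (hY : rho Γ u v huv hadj ((cs).simple y) = aff (-1) ky) (hk : kx ≠ ky) (d : ℕ) :
    ((cs).wordProd (CoxeterSystem.alternatingWord x y d))⁻¹ *
      (cs).simple (if Even d then y else x) *
      (cs).wordProd (CoxeterSystem.alternatingWord x y d) ≠ (cs).simple x := by
  intro hEq
  have hc : kx - ky ≠ 0 := sub_ne_zero.mpr hk
  have h1 := congrArg (rho Γ u v huv hadj) hEq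
  rw [map_mul, map_mul, map_inv, rho_alt Γ u v huv hadj x y kx ky hX hY d, hX] at h1
  by_cases hd : Even d
  · rw [if_pos hd, if_pos hd, hY] at h1
    rw [aff_conj] at h1
    have h2 := aff_m_inj h1
    obtain ⟨e, rfl⟩ := hd
    have h3 : ((e + e) / 2 : ℕ) = e := by omega
    rw [h3] at h2
    norm_num at h2
    -- h2 : ky - 2 * (e * (kx - ky)) = kx
    have h4 : (kx - ky) * (1 + 2 * (e : ℤ)) = 0 := by linarith
    rcases mul_eq_zero.mp h4 with h5 | h5
    · exact hc h5
    · have : (0 : ℤ) ≤ (e : ℤ) := Int.natCast_nonneg e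
      linarith
  · rw [if_neg hd, if_neg hd, hX] at h1
    rw [aff_conj] at h1
    have h2 := aff_m_inj h1
    obtain ⟨e, he⟩ := Nat.not_even_iff_odd.mp hd
    subst he
    have h3 : ((2 * e + 1) / 2 : ℕ) = e := by omega
    rw [h3] at h2
    norm_num at h2
    have h4 : (kx - ky) * (1 + (e : ℤ)) = 0 := by linarith
    rcases mul_eq_zero.mp h4 with h5 | h5
    · exact hc h5
    · have : (0 : ℤ) ≤ (e : ℤ) := Int.natCast_nonneg e
      linarith

end Entry

lemma alternatingWord_drop (x y : V) :
    ∀ k d, (CoxeterSystem.alternatingWord x y d).drop k =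
      CoxeterSystem.alternatingWord x y (d - k) := by
  intro k
  induction k with
  | zero => intro d; simp
  | succ k ih =>
    intro d
    cases d with
    | zero => simp [CoxeterSystem.alternatingWord]
    | succ d =>
      rw [CoxeterSystem.alternatingWord_succ', List.drop_succ_cons, ih d]
      congr 1
      omega

lemma alternatingWord_getElem (x y : V) (n p : ℕ) (hp : p < n) :
    (CoxeterSystem.alternatingWord x y n)[p]'
      (by rw [CoxeterSystem.length_alternatingWord]; exact hp) =
      if Even (n - p - 1) then y else x := by
  have h1 : (CoxeterSystem.alternatingWord x y n).drop p =
      CoxeterSystem.alternatingWord x y (n - p) := alternatingWord_drop x y p n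
  have h2 : n - p = (n - p - 1) + 1 := by omega
  have h3 : ((CoxeterSystem.alternatingWord x y n).drop p)[0]'
      (by rw [List.length_drop, CoxeterSystem.length_alternatingWord]; omega) =
      (CoxeterSystem.alternatingWord x y n)[p]'
      (by rw [CoxeterSystem.length_alternatingWord]; exact hp) := by
    simp [List.getElem_drop]
  rw [← h3]
  have h4 : (CoxeterSystem.alternatingWord x y n).drop p =
      (if Even (n - p - 1) then y else x) :: CoxeterSystem.alternatingWord x y (n - p - 1) := by
    rw [h1, h2, CoxeterSystem.alternatingWord_succ']
    simp
  simp only [h4, List.getElem_cons_zero]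

section Main

variable (u v : V) (huv : u ≠ v) (hadj : ¬ Γ.Adj u v)

include huv hadj in
lemma no_double_descent {w : RW Γ}
    (hu : (cs).length (w * (cs).simple u) < (cs).length w)
    (hv : (cs).length (w * (cs).simple v) < (cs).length w) : False := by
  have aux : ∀ n : ℕ, ∀ x y : V, ((x = u ∧ y = v) ∨ (x = v ∧ y = u)) →
      ∃ σ : List V, (cs).IsReduced (σ ++ CoxeterSystem.alternatingWord y x n) ∧
        w = (cs).wordProd (σ ++ CoxeterSystem.alternatingWord y x n) := by
    intro n
    induction n with
    | zero =>
      intro x y _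
      obtain ⟨σ, hred, hw⟩ := (cs).exists_reduced_word' w
      exact ⟨σ, by simpa [CoxeterSystem.alternatingWord] using hred,
        by simpa [CoxeterSystem.alternatingWord] using hw⟩
    | succ n ih =>
      intro x y hxy
      obtain ⟨σ, hred, hw⟩ := ih y x (by tauto)
      have hdesc : (cs).length
          ((cs).wordProd (σ ++ CoxeterSystem.alternatingWord x y n) * (cs).simple x) <
          (cs).length ((cs).wordProd (σ ++ CoxeterSystem.alternatingWord x y n)) := by
        rw [← hw]
        rcases hxy with ⟨rfl, rfl⟩ | ⟨rfl, rfl⟩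
        · exact hu
        · exact hv
      obtain ⟨j, hj, hentry, herase⟩ := exchange Γ hred hdesc
      have hlen : (σ ++ CoxeterSystem.alternatingWord x y n).length = σ.length + n := by
        rw [List.length_append, CoxeterSystem.length_alternatingWord]
      have hjσ : j < σ.length := by
        by_contra hge
        push_neg at hge
        have hpn : j - σ.length < n := by omega
        set p := j - σ.length with hp
        set d := n - p - 1 with hdd
        have hdrop : (σ ++ CoxeterSystem.alternatingWord x y n).drop (j + 1) =
            CoxeterSystem.alternatingWord x y d := by
          rw [List.drop_append, List.drop_eq_nil_of_le (by omega),
            List.nil_append, alternatingWord_drop]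
          congr 1
          omega
        have hget : (σ ++ CoxeterSystem.alternatingWord x y n)[j]? =
            some (if Even d then y else x) := by
          rw [List.getElem?_eq_getElem (by omega)]
          congr 1
          rw [List.getElem_append_right hge]
          exact alternatingWord_getElem x y n p hpn
        have hform := (cs).getD_rightInvSeq (σ ++ CoxeterSystem.alternatingWord x y n) j
        rw [hdrop, hget] at hform
        simp only [Option.map_some, Option.getD_some] at hform
        rw [hform] at hentry
        rcases hxy with ⟨hx, hy⟩ | ⟨hx, hy⟩
        · rw [hx, hy] at hentry
          exact entry_ne Γ u v huv hadj u v 0 1 (rho_u Γ u v huv hadj)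
            (rho_v Γ u v huv hadj) (by norm_num) d hentry
        · rw [hx, hy] at hentry
          exact entry_ne Γ u v huv hadj v u 1 0 (rho_v Γ u v huv hadj)
            (rho_u Γ u v huv hadj) (by norm_num) d hentry
      have herase2 : (σ ++ CoxeterSystem.alternatingWord x y n).eraseIdx j =
          σ.eraseIdx j ++ CoxeterSystem.alternatingWord x y n :=
        List.eraseIdx_append_of_lt_length hjσ _
      have hcat : σ.eraseIdx j ++ CoxeterSystem.alternatingWord y x (n + 1) =
          (σ.eraseIdx j ++ CoxeterSystem.alternatingWord x y n) ++ [x] := by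
        rw [CoxeterSystem.alternatingWord_succ, List.concat_eq_append, List.append_assoc]
      have hπ : (cs).wordProd (σ.eraseIdx j ++ CoxeterSystem.alternatingWord y x (n + 1)) = w := by
        rw [hcat, (cs).wordProd_append, ← herase2, ← herase, (cs).wordProd_singleton,
          mul_assoc, (cs).simple_mul_simple_self x, mul_one, ← hw]
      have hlenσ : (σ.eraseIdx j).length + 1 = σ.length :=
        List.length_eraseIdx_add_one hjσ
      have hℓw : (cs).length w = σ.length + n := by
        have := hred
        unfold CoxeterSystem.IsReduced at this
        rw [← hw] at this
        omega
      refine ⟨σ.eraseIdx j, ?_, hπ.symm⟩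
      unfold CoxeterSystem.IsReduced
      rw [hπ, List.length_append, CoxeterSystem.length_alternatingWord]
      omega
  obtain ⟨σ, hred, hw⟩ := aux ((cs).length w + 1) u v (Or.inl ⟨rfl, rfl⟩)
  have h1 : (cs).length w = σ.length + ((cs).length w + 1) := by
    have := hred
    unfold CoxeterSystem.IsReduced at this
    rw [← hw] at this
    rw [List.length_append, CoxeterSystem.length_alternatingWord] at this
    omega
  omega

end Main

theorem racg_append_geodesic' {V : Type*} [Fintype V] (Γ : SimpleGraph V)
    (u v : V) (huv : u ≠ v) (hadj : ¬ Γ.Adj u v)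
    (w₁ : List V) (hw : racgIsGeodesic Γ (w₁ ++ [u])) :
    racgIsGeodesic Γ (w₁ ++ [u] ++ [v]) := by
  rw [geodesic_iff_isReduced] at hw ⊢
  set g := (racgCS Γ).wordProd (w₁ ++ [u]) with hg
  have hlen : (racgCS Γ).length g = w₁.length + 1 := by
    have := hw
    unfold CoxeterSystem.IsReduced at this
    rwa [List.length_append, List.length_singleton] at this
  have hu_desc : (racgCS Γ).length (g * (racgCS Γ).simple u) < (racgCS Γ).length g := by
    have hgu : g * (racgCS Γ).simple u = (racgCS Γ).wordProd w₁ := by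
      rw [hg, (racgCS Γ).wordProd_append, (racgCS Γ).wordProd_singleton, mul_assoc,
        (racgCS Γ).simple_mul_simple_self u, mul_one]
    rw [hgu]
    have := (racgCS Γ).length_wordProd_le w₁
    omega
  have hπ : (racgCS Γ).wordProd (w₁ ++ [u] ++ [v]) = g * (racgCS Γ).simple v := by
    rw [(racgCS Γ).wordProd_append, (racgCS Γ).wordProd_singleton, hg]
  rcases (racgCS Γ).length_mul_simple g v with h | h
  · unfold CoxeterSystem.IsReduced
    rw [hπ, h, hlen]
    simp
  · exfalso
    have hv_desc : (racgCS Γ).length (g * (racgCS Γ).simple v) < (racgCS Γ).length g := by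
      omega
    exact no_double_descent Γ u v huv hadj hu_desc hv_desc

end

/-- In a right-angled Coxeter group, if `u ∉ Star(v)` (i.e. `u ≠ v` and `u` is
not adjacent to `v`) and `w` is a geodesic word ending in the letter `u`, then
appending the letter `v` to `w` yields a geodesic word. -/
theorem racg_append_geodesic {V : Type*} [Fintype V] (Γ : SimpleGraph V)
    (u v : V) (huv : u ≠ v) (hadj : ¬ Γ.Adj u v)
    (w₁ : List V) (hw : racgIsGeodesic Γ (w₁ ++ [u])) :
    racgIsGeodesic Γ (w₁ ++ [u] ++ [v]) := by
  exact racg_append_geodesic' Γ u v huv hadj w₁ hw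
end

section
/- Let (G, S) be an even Coxeter system and let w be a geodesic word over S. Suppose there exist s, t ∈ S such that the words (s, w) and (w, t) are geodesic but the word (s, w, t) is not geodesic. Then s = t, and the word (s, w, t) represents the same element of G as w (i.e., s·π(w)·t = π(w) in G). -/
/-- The relators of the even Coxeter system with Coxeter matrix `M`:
`(st)^{M s t} = 1` whenever `M s t ≠ 0` (and `M s s = 1` makes every
generator an involution). -/
def ecoxRels {S : Type*} (M : S → S → ℕ) : Set (FreeGroup S) :=
  {r | ∃ s t : S, M s t ≠ 0 ∧ r = (FreeGroup.of s * FreeGroup.of t) ^ (M s t)}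

/-- `M` is an even Coxeter matrix: `M s s = 1`, `M` is symmetric, and
`M s t` is even (possibly `0`) for `s ≠ t`. -/
def IsEvenCoxeterMatrix {S : Type*} (M : S → S → ℕ) : Prop :=
  (∀ s, M s s = 1) ∧ (∀ s t, M s t = M t s) ∧ (∀ s t : S, s ≠ t → Even (M s t))

/-- The image of a generator in the even Coxeter group. -/
def ecoxGen {S : Type*} (M : S → S → ℕ) (s : S) : PresentedGroup (ecoxRels M) :=
  PresentedGroup.of s

/-- The natural projection `π : S* → G` from words to the even Coxeter group. -/
def ecoxPi {S : Type*} (M : S → S → ℕ) (w : List S) : PresentedGroup (ecoxRels M) :=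
  (w.map fun s => ecoxGen M s).prod

/-- A word over `S` is geodesic if its length equals the word length of the
element it represents, i.e. no shorter word represents the same element. -/
def ecoxIsGeodesic {S : Type*} (M : S → S → ℕ) (w : List S) : Prop :=
  ∀ w' : List S, ecoxPi M w' = ecoxPi M w → w.length ≤ w'.length

set_option linter.unusedSectionVars false
set_option linter.unusedVariables false

namespace EcoxAux

open List CoxeterSystem

variable {B : Type*} {W : Type*} [Group W] {M : CoxeterMatrix B} (cs : CoxeterSystem M W)

lemma zmod2_add_self : ∀ a : ZMod 2, a + a = 0 := by decide

lemma conj_cancel (i : B) (w : W) :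
    cs.simple i * (cs.simple i * w * cs.simple i) * cs.simple i = w := by
  have h := cs.simple_mul_simple_self i
  calc cs.simple i * (cs.simple i * w * cs.simple i) * cs.simple i
      = (cs.simple i * cs.simple i) * w * (cs.simple i * cs.simple i) := by group
    _ = w := by rw [h]; group

lemma conj_eq_iff {c z : W} (h : c * z * c⁻¹ = z) (w : W) :
    c * w * c⁻¹ = z ↔ w = z := by
  constructor
  · intro e
    have e2 : c * w * c⁻¹ = c * z * c⁻¹ := by rw [e, h]
    exact mul_left_cancel (mul_right_cancel e2)
  · rintro rfl; exact h

lemma conj_simple_eq_iff (i j : B) (w : W) :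
    cs.simple j * w * cs.simple j = cs.simple i ↔
      w = cs.simple j * cs.simple i * cs.simple j := by
  constructor
  · intro h
    rw [← h]
    exact (conj_cancel cs j w).symm
  · rintro rfl
    exact conj_cancel cs j _

open scoped Classical in
noncomputable def sigmaFun (i : B) : W × ZMod 2 → W × ZMod 2 :=
  fun p => (cs.simple i * p.1 * cs.simple i, p.2 + if p.1 = cs.simple i then 1 else 0)

open scoped Classical in
lemma sigmaFun_involutive (i : B) : Function.Involutive (sigmaFun cs i) := by
  rintro ⟨w, ε⟩
  unfold sigmaFun
  have hcond : (cs.simple i * w * cs.simple i = cs.simple i) ↔ w = cs.simple i := by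
    have : cs.simple i * cs.simple i * cs.simple i = cs.simple i := by
      rw [cs.simple_mul_simple_self]; group
    constructor
    · intro h
      have := congrArg (fun x => cs.simple i * x * cs.simple i) h
      simp only [conj_cancel] at this
      rw [this, cs.simple_mul_simple_self]; group
    · rintro rfl; exact this
  refine Prod.ext (conj_cancel cs i w) ?_
  simp only [hcond]
  split_ifs
  · show ε + 1 + 1 = ε
    rw [add_assoc, show (1 : ZMod 2) + 1 = 0 by decide, add_zero]
  · show ε + 0 + 0 = ε
    simp

noncomputable def sigma (i : B) : Equiv.Perm (W × ZMod 2) :=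
  (sigmaFun_involutive cs i).toPerm _

lemma sigma_apply (i : B) (p : W × ZMod 2) : sigma cs i p = sigmaFun cs i p := rfl

/-- Indicator sum accumulated along powers of the conjugation. -/
noncomputable def Fc (p : W) (f : W → ZMod 2) : ℕ → W → ZMod 2
  | 0, _ => 0
  | k + 1, w => Fc p f k (p * w * p⁻¹) + f w

open scoped Classical in
/-- The condition function for the pair `(i, j)`. -/
noncomputable def fcond (i j : B) : W → ZMod 2 :=
  fun w => (if w = cs.simple j then 1 else 0) +
    (if w = cs.simple j * cs.simple i * cs.simple j then 1 else 0)

open scoped Classical in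
lemma sigma_mul_apply (i j : B) (w : W) (ε : ZMod 2) :
    (sigma cs i * sigma cs j) (w, ε) =
      ((cs.simple i * cs.simple j) * w * (cs.simple i * cs.simple j)⁻¹,
        ε + fcond cs i j w) := by
  rw [Equiv.Perm.mul_apply, sigma_apply, sigma_apply]
  unfold sigmaFun
  refine Prod.ext ?_ ?_
  · show cs.simple i * (cs.simple j * w * cs.simple j) * cs.simple i = _
    rw [mul_inv_rev, cs.inv_simple, cs.inv_simple]
    group
  · show ε + (if w = cs.simple j then 1 else 0) +
      (if cs.simple j * w * cs.simple j = cs.simple i then 1 else 0) = ε + fcond cs i j w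
    rw [if_congr (conj_simple_eq_iff cs i j w) rfl rfl]
    unfold fcond
    ring

lemma sigma_mul_pow_apply (i j : B) (k : ℕ) (w : W) (ε : ZMod 2) :
    ((sigma cs i * sigma cs j) ^ k) (w, ε) =
      ((cs.simple i * cs.simple j) ^ k * w * ((cs.simple i * cs.simple j) ^ k)⁻¹,
        ε + Fc (cs.simple i * cs.simple j) (fcond cs i j) k w) := by
  induction k generalizing w ε with
  | zero => simp [Fc]
  | succ k ih =>
    rw [pow_succ, Equiv.Perm.mul_apply, sigma_mul_apply, ih]
    refine Prod.ext ?_ ?_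
    · show (cs.simple i * cs.simple j) ^ k * ((cs.simple i * cs.simple j) * w *
        (cs.simple i * cs.simple j)⁻¹) * ((cs.simple i * cs.simple j) ^ k)⁻¹ = _
      rw [pow_succ, mul_inv_rev]
      group
    · show ε + fcond cs i j w +
        Fc (cs.simple i * cs.simple j) (fcond cs i j) k
          ((cs.simple i * cs.simple j) * w * (cs.simple i * cs.simple j)⁻¹) = _
      show _ = ε + (Fc (cs.simple i * cs.simple j) (fcond cs i j) k
          ((cs.simple i * cs.simple j) * w * (cs.simple i * cs.simple j)⁻¹) + fcond cs i j w)
      ring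

lemma Fc_conj_inv {p c : W} {f : W → ZMod 2} (hf : ∀ u, f (c * u * c⁻¹) = f u)
    (hc : ∀ u, p * (c * u * c⁻¹) * p⁻¹ = c * (p * u * p⁻¹) * c⁻¹) (k : ℕ) (w : W) :
    Fc p f k (c * w * c⁻¹) = Fc p f k w := by
  induction k generalizing w with
  | zero => rfl
  | succ k ih =>
    show Fc p f k (p * (c * w * c⁻¹) * p⁻¹) + f (c * w * c⁻¹) = Fc p f k (p * w * p⁻¹) + f w
    rw [hc, ih, hf]

end EcoxAux

namespace EcoxAux

variable {B : Type*} {W : Type*} [Group W] {M : CoxeterMatrix B} (cs : CoxeterSystem M W)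

lemma sigma_liftable (hEven : ∀ i j, i ≠ j → Even (M i j)) :
    CoxeterMatrix.IsLiftable M (sigma cs) := by
  intro i j
  by_cases hij : i = j
  · subst hij
    rw [M.diagonal, pow_one]
    refine Equiv.ext fun p => ?_
    rw [Equiv.Perm.mul_apply]
    exact sigmaFun_involutive cs i p
  · obtain ⟨q, hq⟩ := hEven i j hij
    set p := cs.simple i * cs.simple j with hp_def
    have hp : p ^ M i j = 1 := cs.simple_mul_simple_pow i j
    have hqq : p ^ q * p ^ q = 1 := by rw [← pow_add, ← hq]; exact hp
    have hpq_inv : (p ^ q)⁻¹ = p ^ q := inv_eq_of_mul_eq_one_right hqq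
    -- commutation of `p ^ q` with the simple reflections `s i`, `s j`
    have hconj_j : cs.simple j * p * (cs.simple j)⁻¹ = p⁻¹ := by
      rw [hp_def, cs.inv_simple, mul_inv_rev, cs.inv_simple, cs.inv_simple]
      calc cs.simple j * (cs.simple i * cs.simple j) * cs.simple j
          = cs.simple j * cs.simple i * (cs.simple j * cs.simple j) := by group
        _ = cs.simple j * cs.simple i := by rw [cs.simple_mul_simple_self]; group
    have hconj_i : cs.simple i * p * (cs.simple i)⁻¹ = p⁻¹ := by
      rw [hp_def, cs.inv_simple, mul_inv_rev, cs.inv_simple, cs.inv_simple]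
      calc cs.simple i * (cs.simple i * cs.simple j) * cs.simple i
          = (cs.simple i * cs.simple i) * cs.simple j * cs.simple i := by group
        _ = cs.simple j * cs.simple i := by rw [cs.simple_mul_simple_self]; group
    have comm_j : p ^ q * cs.simple j = cs.simple j * p ^ q := by
      have e : cs.simple j * p ^ q * (cs.simple j)⁻¹ = p ^ q := by
        rw [← conj_pow, hconj_j, inv_pow, hpq_inv]
      calc p ^ q * cs.simple j = cs.simple j * p ^ q * (cs.simple j)⁻¹ * cs.simple j := by
            rw [e]
        _ = cs.simple j * p ^ q := by
            rw [cs.inv_simple, mul_assoc (cs.simple j * p ^ q), cs.simple_mul_simple_self,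
              mul_one]
    have comm_i : p ^ q * cs.simple i = cs.simple i * p ^ q := by
      have e : cs.simple i * p ^ q * (cs.simple i)⁻¹ = p ^ q := by
        rw [← conj_pow, hconj_i, inv_pow, hpq_inv]
      calc p ^ q * cs.simple i = cs.simple i * p ^ q * (cs.simple i)⁻¹ * cs.simple i := by
            rw [e]
        _ = cs.simple i * p ^ q := by
            rw [cs.inv_simple, mul_assoc (cs.simple i * p ^ q), cs.simple_mul_simple_self,
              mul_one]
    have fixed_j : p ^ q * cs.simple j * (p ^ q)⁻¹ = cs.simple j := by
      rw [comm_j, mul_assoc, hpq_inv, hqq, mul_one]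
    have fixed_z : p ^ q * (cs.simple j * cs.simple i * cs.simple j) * (p ^ q)⁻¹ =
        cs.simple j * cs.simple i * cs.simple j := by
      have : p ^ q * (cs.simple j * cs.simple i * cs.simple j) =
          (cs.simple j * cs.simple i * cs.simple j) * p ^ q := by
        calc p ^ q * (cs.simple j * cs.simple i * cs.simple j)
            = (p ^ q * cs.simple j) * cs.simple i * cs.simple j := by group
          _ = cs.simple j * (p ^ q * cs.simple i) * cs.simple j := by rw [comm_j]; group
          _ = cs.simple j * cs.simple i * (p ^ q * cs.simple j) := by rw [comm_i]; group
          _ = (cs.simple j * cs.simple i * cs.simple j) * p ^ q := by rw [comm_j]; group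
      rw [this, mul_assoc, hpq_inv, hqq, mul_one]
    classical
    have hf : ∀ u, fcond cs i j (p ^ q * u * (p ^ q)⁻¹) = fcond cs i j u := by
      intro u
      unfold fcond
      rw [if_congr (conj_eq_iff fixed_j u) rfl rfl, if_congr (conj_eq_iff fixed_z u) rfl rfl]
    have hcmix : ∀ u, p * (p ^ q * u * (p ^ q)⁻¹) * p⁻¹ =
        p ^ q * (p * u * p⁻¹) * (p ^ q)⁻¹ := by intro u; group
    refine Equiv.ext fun x => ?_
    obtain ⟨w, ε⟩ := x
    rw [hq, pow_add, Equiv.Perm.mul_apply, sigma_mul_pow_apply, sigma_mul_pow_apply]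
    rw [← hp_def]
    refine Prod.ext ?_ ?_
    · show p ^ q * (p ^ q * w * (p ^ q)⁻¹) * (p ^ q)⁻¹ = _
      have : p ^ q * (p ^ q * w * (p ^ q)⁻¹) * (p ^ q)⁻¹ =
          (p ^ q * p ^ q) * w * (p ^ q * p ^ q)⁻¹ := by group
      rw [this, hqq]
      simp
    · show ε + Fc p (fcond cs i j) q w +
        Fc p (fcond cs i j) q (p ^ q * w * (p ^ q)⁻¹) = ε
      rw [Fc_conj_inv hf hcmix, add_assoc, zmod2_add_self, add_zero]

end EcoxAux

namespace EcoxAux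

open List CoxeterSystem

variable {B : Type*} {W : Type*} [Group W] {M : CoxeterMatrix B} (cs : CoxeterSystem M W)
variable (hEven : ∀ i j, i ≠ j → Even (M i j))

lemma ris_cons (i : B) (ω : List B) :
    cs.rightInvSeq (i :: ω) =
      ((cs.wordProd ω)⁻¹ * cs.simple i * cs.wordProd ω) :: cs.rightInvSeq ω := rfl

lemma conj_eq_iff' (u t x : W) : u * t * u⁻¹ = x ↔ u⁻¹ * x * u = t := by
  constructor
  · rintro rfl; group
  · rintro rfl; group

include hEven

/-- The sign homomorphism built from the `sigma` action. -/
noncomputable def phiHom : W →* Equiv.Perm (W × ZMod 2) :=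
  cs.lift ⟨sigma cs, sigma_liftable cs hEven⟩

lemma phiHom_simple (i : B) : phiHom cs hEven (cs.simple i) = sigma cs i :=
  cs.lift_apply_simple _ i

lemma phi_wordProd [DecidableEq W] (ω : List B) (t : W) (ε : ZMod 2) :
    phiHom cs hEven (cs.wordProd ω) (t, ε) =
      (cs.wordProd ω * t * (cs.wordProd ω)⁻¹,
        ε + ((cs.rightInvSeq ω).count t : ZMod 2)) := by
  induction ω with
  | nil => simp [cs.wordProd_nil, map_one]
  | cons i ω ih =>
    rw [cs.wordProd_cons, map_mul, Equiv.Perm.mul_apply, ih, phiHom_simple, sigma_apply]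
    unfold sigmaFun
    refine Prod.ext ?_ ?_
    · dsimp only
      rw [mul_inv_rev, cs.inv_simple]
      group
    · dsimp only
      rw [ris_cons, List.count_cons]
      simp only [beq_iff_eq]
      push_cast
      simp only [conj_eq_iff' (cs.wordProd ω) t (cs.simple i)]
      split_ifs with h <;> ring

lemma count_ris_parity [DecidableEq W] {ω ω' : List B}
    (h : cs.wordProd ω = cs.wordProd ω') (t : W) :
    ((cs.rightInvSeq ω).count t : ZMod 2) = ((cs.rightInvSeq ω').count t : ZMod 2) := by
  have h1 := phi_wordProd cs hEven ω t 0
  have h2 := phi_wordProd cs hEven ω' t 0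
  rw [h] at h1
  rw [h1] at h2
  have := congrArg Prod.snd h2
  simpa using this

lemma right_exchange {ω : List B} (hred : cs.IsReduced ω) {j : B}
    (hdesc : cs.IsRightDescent (cs.wordProd ω) j) :
    ∃ k, k < ω.length ∧ cs.wordProd ω * cs.simple j = cs.wordProd (ω.eraseIdx k) := by
  classical
  obtain ⟨ω', hlen', heq'⟩ := cs.exists_reduced_word (cs.wordProd ω * cs.simple j)
  have hdl : cs.length (cs.wordProd ω * cs.simple j) + 1 = cs.length (cs.wordProd ω) :=
    cs.isRightDescent_iff.mp hdesc
  set ω'' : List B := ω' ++ [j] with hω''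
  have hprod : cs.wordProd ω'' = cs.wordProd ω := by
    rw [hω'', cs.wordProd_append, cs.wordProd_singleton, ← heq',
      cs.simple_mul_simple_cancel_right]
  have hred'' : cs.IsReduced ω'' := by
    show cs.length (cs.wordProd ω'') = ω''.length
    rw [hprod, hω'', List.length_append, List.length_singleton,
      ← (show cs.length (cs.wordProd ω') = ω'.length from hlen'), ← heq', hdl]
  have hmem'' : cs.simple j ∈ cs.rightInvSeq ω'' := by
    rw [hω'', ← List.concat_eq_append, cs.rightInvSeq_concat]
    simp
  have hcount'' : (cs.rightInvSeq ω'').count (cs.simple j) = 1 :=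
    List.count_eq_one_of_mem (hred''.nodup_rightInvSeq) hmem''
  have hparity := count_ris_parity cs hEven hprod.symm (cs.simple j)
  rw [hcount''] at hparity
  have hmem : cs.simple j ∈ cs.rightInvSeq ω := by
    by_contra hnm
    rw [List.count_eq_zero_of_not_mem hnm] at hparity
    simp at hparity
  obtain ⟨k, hk, hget⟩ := List.getElem_of_mem hmem
  rw [cs.length_rightInvSeq] at hk
  refine ⟨k, hk, ?_⟩
  have hgetD : (cs.rightInvSeq ω).getD k 1 = cs.simple j := by
    rw [List.getD_eq_getElem _ 1 (by rw [cs.length_rightInvSeq]; exact hk)]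
    exact hget
  rw [← hgetD]
  exact cs.wordProd_mul_getD_rightInvSeq ω k

lemma lifting {ω : List B} (hred : cs.IsReduced ω) {a b : B}
    (ha : cs.length (cs.simple a * cs.wordProd ω) = ω.length + 1)
    (hb : cs.length (cs.wordProd ω * cs.simple b) = ω.length + 1)
    (hab : cs.length (cs.simple a * cs.wordProd ω * cs.simple b) ≤ ω.length + 1) :
    cs.simple a * cs.wordProd ω * cs.simple b = cs.wordProd ω := by
  set n := ω.length with hn
  have hlen : cs.length (cs.wordProd ω) = n := hred
  have hred1 : cs.IsReduced (a :: ω) := by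
    show cs.length (cs.wordProd (a :: ω)) = (a :: ω).length
    rw [cs.wordProd_cons, ha, List.length_cons]
  have hparity : cs.length (cs.simple a * cs.wordProd ω * cs.simple b) % 2 = n % 2 := by
    have := cs.length_mul_mod_two (cs.simple a * cs.wordProd ω) (cs.simple b)
    rw [cs.length_simple, ha] at this
    omega
  have hlt : cs.length (cs.wordProd (a :: ω) * cs.simple b) < cs.length (cs.wordProd (a :: ω)) := by
    rw [cs.wordProd_cons, ha]
    rcases lt_or_eq_of_le hab with h | h
    · exact h
    · omega
  have hdesc : cs.IsRightDescent (cs.wordProd (a :: ω)) b := hlt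
  obtain ⟨k, hk, heq⟩ := right_exchange cs hEven hred1 hdesc
  rw [cs.wordProd_cons] at heq
  match k with
  | 0 =>
    rw [List.eraseIdx_cons_zero] at heq
    exact heq
  | k' + 1 =>
    exfalso
    rw [List.eraseIdx_cons_succ] at heq
    rw [cs.wordProd_cons] at heq
    have heq2 : cs.wordProd ω * cs.simple b = cs.wordProd (ω.eraseIdx k') :=
      mul_left_cancel (by rw [← mul_assoc]; exact heq)
    have hlek : cs.length (cs.wordProd (ω.eraseIdx k')) ≤ (ω.eraseIdx k').length :=
      cs.length_wordProd_le _
    have hk' : k' < ω.length := by simpa using hk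
    have : (ω.eraseIdx k').length + 1 = ω.length := List.length_eraseIdx_add_one hk'
    rw [← heq2] at hlek
    omega

end EcoxAux

namespace EcoxAux

variable {S : Type*} (M : S → S → ℕ) (hM : IsEvenCoxeterMatrix M)

/-- The even Coxeter matrix as a Mathlib `CoxeterMatrix`. -/
def ecoxCM : CoxeterMatrix S where
  M := Matrix.of M
  isSymm := by ext i j; exact hM.2.1 j i
  diagonal := hM.1
  off_diagonal := fun s t hst h1 => by
    rcases hM.2.2 s t hst with ⟨r, hr⟩
    simp only [Matrix.of_apply] at h1
    omega

lemma ecox_closure_eq :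
    Subgroup.normalClosure (ecoxRels M) =
      Subgroup.normalClosure ((ecoxCM M hM).relationsSet) := by
  apply le_antisymm
  · apply Subgroup.normalClosure_le_normal
    rintro r ⟨s, t, h0, rfl⟩
    apply Subgroup.subset_normalClosure
    exact ⟨(s, t), rfl⟩
  · apply Subgroup.normalClosure_le_normal
    rintro r ⟨⟨s, t⟩, rfl⟩
    by_cases h0 : M s t = 0
    · have h1 : Function.uncurry (ecoxCM M hM).relation (s, t) = 1 := by
        show ((FreeGroup.of s * FreeGroup.of t) ^ (M s t) : FreeGroup S) = 1
        rw [h0, pow_zero]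
      rw [h1]
      exact one_mem _
    · exact Subgroup.subset_normalClosure ⟨s, t, h0, rfl⟩

/-- The Coxeter system on the even Coxeter group. -/
noncomputable def ecoxCS : CoxeterSystem (ecoxCM M hM) (PresentedGroup (ecoxRels M)) :=
  ⟨QuotientGroup.quotientMulEquivOfEq (ecox_closure_eq M hM)⟩

lemma ecoxCS_simple (i : S) : (ecoxCS M hM).simple i = ecoxGen M i := by
  show (ecoxCS M hM).mulEquiv.symm ((ecoxCM M hM).simple i) = ecoxGen M i
  rw [MulEquiv.symm_apply_eq]
  exact (QuotientGroup.quotientMulEquivOfEq_mk (ecox_closure_eq M hM) (FreeGroup.of i)).symm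

lemma ecoxPi_eq (w : List S) : ecoxPi M w = (ecoxCS M hM).wordProd w := by
  unfold ecoxPi CoxeterSystem.wordProd
  have h : (ecoxCS M hM).simple = fun s => ecoxGen M s := funext (ecoxCS_simple M hM)
  rw [h]

end EcoxAux


namespace EcoxAux

open CoxeterSystem

variable {S : Type*} (M : S → S → ℕ) (hM : IsEvenCoxeterMatrix M)

lemma pi2_add_self (u : S → ZMod 2) : u + u = 0 :=
  funext fun x => zmod2_add_self (u x)

lemma mul_self_one (g : Multiplicative (S → ZMod 2)) : g * g = 1 := by
  have h : Multiplicative.toAdd g + Multiplicative.toAdd g = 0 := pi2_add_self _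
  calc g * g = Multiplicative.ofAdd (Multiplicative.toAdd g + Multiplicative.toAdd g) := rfl
    _ = Multiplicative.ofAdd 0 := by rw [h]
    _ = 1 := rfl

include hM

open scoped Classical in
/-- The generator-parity function. -/
noncomputable def deltaFun (i : S) : Multiplicative (S → ZMod 2) :=
  Multiplicative.ofAdd (fun x => if x = i then 1 else 0)

lemma delta_liftable : CoxeterMatrix.IsLiftable (ecoxCM M hM) (deltaFun (S := S)) := by
  intro i j
  by_cases hij : i = j
  · subst hij
    rw [(ecoxCM M hM).diagonal, pow_one]
    exact mul_self_one _
  · rcases hM.2.2 i j hij with ⟨r, hr⟩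
    have h : (ecoxCM M hM) i j = r + r := hr
    rw [h, pow_add]
    exact mul_self_one _

theorem ecox_forbidden_aux (s t : S) (w : List S)
    (hw : ecoxIsGeodesic M w)
    (hsw : ecoxIsGeodesic M (s :: w))
    (hwt : ecoxIsGeodesic M (w ++ [t]))
    (hnot : ¬ ecoxIsGeodesic M (s :: (w ++ [t]))) :
    s = t ∧ ecoxGen M s * ecoxPi M w * ecoxGen M t = ecoxPi M w := by
  classical
  set cs := ecoxCS M hM with hcs
  have hEven : ∀ i j, i ≠ j → Even ((ecoxCM M hM) i j) := fun i j hij => hM.2.2 i j hij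
  have geod_iff : ∀ ω : List S, ecoxIsGeodesic M ω ↔ cs.IsReduced ω := by
    intro ω
    constructor
    · intro hg
      obtain ⟨ω', hlen, heq⟩ := cs.exists_reduced_word (cs.wordProd ω)
      have h1 : ecoxPi M ω' = ecoxPi M ω := by
        rw [ecoxPi_eq M hM, ecoxPi_eq M hM, ← hcs]; exact heq.symm
      have h2 := hg ω' h1
      have h3 := cs.length_wordProd_le ω
      show cs.length (cs.wordProd ω) = ω.length
      have hlen2 : cs.length (cs.wordProd ω) = ω'.length := by rw [heq]; exact hlen
      omega
    · intro hr ω' h1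
      rw [ecoxPi_eq M hM, ecoxPi_eq M hM, ← hcs] at h1
      have h2 := cs.length_wordProd_le ω'
      have h3 : cs.length (cs.wordProd ω') = cs.length (cs.wordProd ω) := by rw [h1]
      have hr' : cs.length (cs.wordProd ω) = ω.length := hr
      omega
  have hredw : cs.IsReduced w := (geod_iff w).mp hw
  have hredw' : cs.length (cs.wordProd w) = w.length := hredw
  have ha : cs.length (cs.simple s * cs.wordProd w) = w.length + 1 := by
    have h1 : cs.length (cs.wordProd (s :: w)) = (s :: w).length := (geod_iff _).mp hsw
    rwa [cs.wordProd_cons, List.length_cons] at h1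
  have hb : cs.length (cs.wordProd w * cs.simple t) = w.length + 1 := by
    have h1 : cs.length (cs.wordProd (w ++ [t])) = (w ++ [t]).length := (geod_iff _).mp hwt
    rwa [cs.wordProd_append, cs.wordProd_singleton, List.length_append,
      List.length_singleton] at h1
  have hnr : ¬ cs.IsReduced (s :: (w ++ [t])) := fun h => hnot ((geod_iff _).mpr h)
  have hprod3 : cs.wordProd (s :: (w ++ [t])) = cs.simple s * cs.wordProd w * cs.simple t := by
    rw [cs.wordProd_cons, cs.wordProd_append, cs.wordProd_singleton, mul_assoc]
  have hlen3 : (s :: (w ++ [t])).length = w.length + 2 := by simp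
  have hle3 : cs.length (cs.simple s * cs.wordProd w * cs.simple t) ≤ w.length + 1 := by
    have h1 := cs.length_wordProd_le (s :: (w ++ [t]))
    rw [hprod3, hlen3] at h1
    have h2 : cs.length (cs.simple s * cs.wordProd w * cs.simple t) ≠ w.length + 2 := by
      intro h
      apply hnr
      show cs.length (cs.wordProd (s :: (w ++ [t]))) = (s :: (w ++ [t])).length
      rw [hprod3, hlen3, h]
    omega
  have key : cs.simple s * cs.wordProd w * cs.simple t = cs.wordProd w :=
    lifting cs hEven hredw ha hb hle3
  constructor
  · -- s = t via the generator-parity homomorphism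
    set psi := cs.lift ⟨deltaFun (S := S), delta_liftable M hM⟩ with hpsi
    have h2 := congrArg psi key
    rw [map_mul, map_mul, hpsi, cs.lift_apply_simple (delta_liftable M hM) s,
      cs.lift_apply_simple (delta_liftable M hM) t, ← hpsi] at h2
    have h3 : deltaFun s * deltaFun t = 1 := by
      rw [mul_right_comm] at h2
      exact mul_eq_right.mp h2
    by_contra hst
    have h4 := congrArg Multiplicative.toAdd h3
    have h5 := congrFun h4 s
    simp only [toAdd_mul, toAdd_one, Pi.add_apply, Pi.zero_apply] at h5
    have h6 : Multiplicative.toAdd (deltaFun (S := S) s) s = 1 := by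
      show (if s = s then (1 : ZMod 2) else 0) = 1
      rw [if_pos rfl]
    have h7 : Multiplicative.toAdd (deltaFun (S := S) t) s = 0 := by
      show (if s = t then (1 : ZMod 2) else 0) = 0
      rw [if_neg hst]
    rw [h6, h7] at h5
    exact absurd h5 (by decide)
  · rw [ecoxPi_eq M hM w, ← hcs, ← ecoxCS_simple M hM s, ← ecoxCS_simple M hM t, ← hcs]
    exact key

end EcoxAux

/-- In an even Coxeter system, if `w`, `(s, w)` and `(w, t)` are geodesic but
`(s, w, t)` is not, then `s = t` and `(s, w, t)` represents the same element
as `w`. -/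
theorem ecox_forbidden {S : Type*} (M : S → S → ℕ) (hM : IsEvenCoxeterMatrix M)
    (s t : S) (w : List S)
    (hw : ecoxIsGeodesic M w)
    (hsw : ecoxIsGeodesic M (s :: w))
    (hwt : ecoxIsGeodesic M (w ++ [t]))
    (hnot : ¬ ecoxIsGeodesic M (s :: (w ++ [t]))) :
    s = t ∧ ecoxGen M s * ecoxPi M w * ecoxGen M t = ecoxPi M w :=
  EcoxAux.ecox_forbidden_aux M hM s t w hw hsw hwt hnot
end
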